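/- Let K be a field, N ≥ 2 an integer, and f : E → E' a K-linear map between finite-dimensional K-vector spaces. Consider the sequence of vector spaces M_j = E'^⊗j ⊗ E^⊗(N-1-j) for 0 ≤ j ≤ N-1 (with M_j = 0 for other j), together with the linear maps d_j : M_j → M_{j+1} given by d_j = id_{E'}^⊗j ⊗ f ⊗ id_E^⊗(N-2-j) for 0 ≤ j ≤ N-2 (under the canonical associativity identifications of tensor powers), and the zero map otherwise. Then this N-complex is acyclic — i.e. for every p ∈ {1, …, N-1} and every index j, the kernel of the composite of p consecutive maps starting at M_j equals the image of the composite of N-p consecutive maps ending at M_j (where compositions extending outside the range 0 ≤ j ≤ N-1 are zero maps) — if and only if f is bijective. -/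

import Mathlib

open TensorProduct


section NComplex

variable (K : Type*) [Field K]

/-- The composite of `q` consecutive maps of a `ℕ`-indexed sequence of linear maps,
starting at position `i`. -/
def compMaps {M : ℕ → Type*} [∀ j, AddCommGroup (M j)] [∀ j, Module K (M j)]
    (d : ∀ j, M j →ₗ[K] M (j + 1)) : ∀ (i q : ℕ), M i →ₗ[K] M (i + q)
  | _, 0 => LinearMap.id
  | i, q + 1 => (d (i + q)).comp (compMaps d i q)

/-- Acyclicity of an `N`-complex `(M_j, d_j)` supported in degrees `0, …, n` (with `M_j = 0`
and zero maps outside this range): for every `p ∈ {1, …, N-1}` and every position `j`, the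
kernel of the composite of `p` consecutive maps starting at `M_j` equals the image of the
composite of `N - p` consecutive maps ending at `M_j`; compositions extending outside the
range are zero maps, so positions `j < N - p` receive zero image. -/
def IsAcyclicN (N n : ℕ) {M : ℕ → Type*} [∀ j, AddCommGroup (M j)] [∀ j, Module K (M j)]
    (d : ∀ j, M j →ₗ[K] M (j + 1)) : Prop :=
  ∀ p, 1 ≤ p → p ≤ N - 1 →
    (∀ i, i + (N - p) ≤ n →
      LinearMap.ker (compMaps K d (i + (N - p)) p)
        = LinearMap.range (compMaps K d i (N - p))) ∧
    (∀ j, j ≤ n → j < N - p → LinearMap.ker (compMaps K d j p) = ⊥)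

end NComplex

section KoszulComplex

variable (K : Type*) [Field K] (E E' : Type*)
  [AddCommGroup E] [Module K E] [AddCommGroup E'] [Module K E']

/-- The canonical identification `V ≅ V^⊗1`. -/
noncomputable def toPow1 (V : Type*) [AddCommGroup V] [Module K V] : V ≃ₗ[K] ⨂[K]^1 V :=
  (PiTensorProduct.subsingletonEquiv (s := fun _ : Fin 1 => V) (0 : Fin 1)).symm

/-- The differential of the Koszul-type complex with spaces `M_j = E'^⊗j ⊗ E^⊗(n-j)`: for
`j < n` it is `id_{E'}^⊗j ⊗ f ⊗ id_E^⊗(n-1-j)` (under the canonical associativity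
identifications), and it is the zero map otherwise. -/
noncomputable def dKoszul (f : E →ₗ[K] E') (n j : ℕ) :
    ((⨂[K]^j E') ⊗[K] (⨂[K]^(n - j) E)) →ₗ[K]
      ((⨂[K]^(j + 1) E') ⊗[K] (⨂[K]^(n - (j + 1)) E)) :=
  if h : j < n then
    LinearMap.rTensor (⨂[K]^(n - (j + 1)) E)
        ((TensorPower.mulEquiv (n := j) (m := 1)).toLinearMap
          ∘ₗ LinearMap.lTensor (⨂[K]^j E') (toPow1 K E').toLinearMap)
      ∘ₗ (TensorProduct.assoc K (⨂[K]^j E') E' (⨂[K]^(n - (j + 1)) E)).symm.toLinearMap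
      ∘ₗ LinearMap.lTensor (⨂[K]^j E') (LinearMap.rTensor (⨂[K]^(n - (j + 1)) E) f)
      ∘ₗ LinearMap.lTensor (⨂[K]^j E')
          ((TensorProduct.map
              (PiTensorProduct.subsingletonEquiv (0 : Fin 1)).toLinearMap
              (LinearMap.id : (⨂[K]^(n - (j + 1)) E) →ₗ[K] (⨂[K]^(n - (j + 1)) E)))
            ∘ₗ (TensorPower.mulEquiv (n := 1) (m := n - (j + 1))).symm.toLinearMap
            ∘ₗ (TensorPower.cast K E (by omega : n - j = 1 + (n - (j + 1)))).toLinearMap)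
  else 0

end KoszulComplex


section Helpers

open Function

variable {K : Type*} [Field K]

lemma aux_exists_dual {W : Type*} [AddCommGroup W] [Module K W] {w : W} (hw : w ≠ 0) :
    ∃ φ : W →ₗ[K] K, φ w = 1 := by
  obtain ⟨g, hg⟩ := (LinearMap.toSpanSingleton K W w).exists_leftInverse_of_injective
    (LinearMap.ker_toSpanSingleton K hw)
  refine ⟨g, ?_⟩
  have := LinearMap.congr_fun hg 1
  simpa using this

variable {A B M N : Type*} [AddCommGroup A] [Module K A] [AddCommGroup B] [Module K B]
  [AddCommGroup M] [Module K M] [AddCommGroup N] [Module K N]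

lemma aux_tmul_cancel {w : A} {φ : A →ₗ[K] K} (hφ : φ w = 1) {x : M}
    (h : (w ⊗ₜ[K] x : A ⊗[K] M) = 0) : x = 0 := by
  have := congrArg (⇑((TensorProduct.lid K M).toLinearMap ∘ₗ
    TensorProduct.map φ (LinearMap.id (R := K) (M := M)))) h
  simpa [hφ] using this

lemma aux_tmul_cancel' {w : A} {φ : A →ₗ[K] K} (hφ : φ w = 1) {x : M}
    (h : (x ⊗ₜ[K] w : M ⊗[K] A) = 0) : x = 0 := by
  have := congrArg (⇑((TensorProduct.rid K M).toLinearMap ∘ₗ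
    TensorProduct.map (LinearMap.id (R := K) (M := M)) φ)) h
  simpa [hφ] using this

lemma aux_lTensor_inj [Nontrivial A] {g : M →ₗ[K] N}
    (h : Injective ⇑(LinearMap.lTensor (R := K) A g)) : Injective ⇑g := by
  obtain ⟨w, hw⟩ := exists_ne (0 : A)
  obtain ⟨φ, hφ⟩ := aux_exists_dual (K := K) hw
  refine (injective_iff_map_eq_zero g).mpr fun x hx => ?_
  have h0 : LinearMap.lTensor (R := K) A g (w ⊗ₜ x) = LinearMap.lTensor (R := K) A g 0 := by simp [hx]
  exact aux_tmul_cancel hφ (h h0)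

lemma aux_rTensor_inj [Nontrivial A] {g : M →ₗ[K] N}
    (h : Injective ⇑(LinearMap.rTensor (R := K) A g)) : Injective ⇑g := by
  obtain ⟨w, hw⟩ := exists_ne (0 : A)
  obtain ⟨φ, hφ⟩ := aux_exists_dual (K := K) hw
  refine (injective_iff_map_eq_zero g).mpr fun x hx => ?_
  have h0 : LinearMap.rTensor (R := K) A g (x ⊗ₜ w) = LinearMap.rTensor (R := K) A g 0 := by simp [hx]
  exact aux_tmul_cancel' hφ (h h0)

lemma aux_lTensor_surj [Nontrivial A] {g : M →ₗ[K] N}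
    (h : Surjective ⇑(LinearMap.lTensor (R := K) A g)) : Surjective ⇑g := by
  obtain ⟨w, hw⟩ := exists_ne (0 : A)
  obtain ⟨φ, hφ⟩ := aux_exists_dual (K := K) hw
  intro y
  obtain ⟨t, ht⟩ := h (w ⊗ₜ y)
  refine ⟨((TensorProduct.lid K M).toLinearMap ∘ₗ
    TensorProduct.map φ (LinearMap.id (R := K) (M := M))) t, ?_⟩
  have hnat : ∀ t : A ⊗[K] M,
      g (((TensorProduct.lid K M).toLinearMap ∘ₗ
        TensorProduct.map φ (LinearMap.id (R := K) (M := M))) t)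
      = ((TensorProduct.lid K N).toLinearMap ∘ₗ
        TensorProduct.map φ (LinearMap.id (R := K) (M := N))) (LinearMap.lTensor (R := K) A g t) := by
    intro t
    induction t using TensorProduct.induction_on with
    | zero => simp
    | tmul a b => simp
    | add a b ha hb =>
      simp only [map_add, LinearMap.coe_comp, Function.comp_apply] at ha hb ⊢
      rw [ha, hb]
  rw [hnat, ht]
  simp [hφ]

lemma aux_rTensor_surj [Nontrivial A] {g : M →ₗ[K] N}
    (h : Surjective ⇑(LinearMap.rTensor (R := K) A g)) : Surjective ⇑g := by
  obtain ⟨w, hw⟩ := exists_ne (0 : A)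
  obtain ⟨φ, hφ⟩ := aux_exists_dual (K := K) hw
  intro y
  obtain ⟨t, ht⟩ := h (y ⊗ₜ w)
  refine ⟨((TensorProduct.rid K M).toLinearMap ∘ₗ
    TensorProduct.map (LinearMap.id (R := K) (M := M)) φ) t, ?_⟩
  have hnat : ∀ t : M ⊗[K] A,
      g (((TensorProduct.rid K M).toLinearMap ∘ₗ
        TensorProduct.map (LinearMap.id (R := K) (M := M)) φ) t)
      = ((TensorProduct.rid K N).toLinearMap ∘ₗ
        TensorProduct.map (LinearMap.id (R := K) (M := N)) φ) (LinearMap.rTensor (R := K) A g t) := by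
    intro t
    induction t using TensorProduct.induction_on with
    | zero => simp
    | tmul a b => simp
    | add a b ha hb =>
      simp only [map_add, LinearMap.coe_comp, Function.comp_apply] at ha hb ⊢
      rw [ha, hb]
  rw [hnat, ht]
  simp [hφ]

lemma aux_surj_left {C : Type*} [AddCommGroup C] [Module K C]
    (a : B →ₗ[K] C) (b : A →ₗ[K] B) (h : Function.Surjective ⇑(a ∘ₗ b)) :
    Function.Surjective ⇑a := by
  rw [LinearMap.coe_comp] at h
  exact h.of_comp

lemma aux_bij_comp {C : Type*} [AddCommGroup C] [Module K C]
    (a : B →ₗ[K] C) (b : A →ₗ[K] B) (ha : Bijective ⇑a) (hb : Bijective ⇑b) :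
    Bijective ⇑(a ∘ₗ b) := by
  rw [LinearMap.coe_comp]; exact ha.comp hb

lemma aux_inj_cancel {α β γ : Sort*} {h : β → γ} {g : α → β}
    (H : Injective (h ∘ g)) (hg : Surjective g) : Injective h := by
  intro a b hab
  obtain ⟨a', rfl⟩ := hg a
  obtain ⟨b', rfl⟩ := hg b
  exact congrArg g (H hab)

lemma aux_surj_cancel {α β γ : Sort*} {h : β → γ} {g : α → β}
    (H : Surjective (h ∘ g)) (hh : Injective h) : Surjective g := by
  intro b
  obtain ⟨a, ha⟩ := H (h b)
  exact ⟨a, hh ha⟩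

lemma aux_equiv_bij (e : A ≃ₗ[K] B) : Bijective ⇑(e.toLinearMap) := e.bijective

lemma aux_bij_lTensor (g : M →ₗ[K] N) (hg : Bijective ⇑g) :
    Bijective ⇑(LinearMap.lTensor (R := K) A g) := by
  let e := LinearEquiv.ofBijective g hg
  have he : LinearMap.lTensor (R := K) A g = (LinearEquiv.lTensor (R := K) A e).toLinearMap := by
    ext w x
    simp [e]
  rw [he]; exact (LinearEquiv.lTensor (R := K) A e).bijective

lemma aux_bij_rTensor (g : M →ₗ[K] N) (hg : Bijective ⇑g) :
    Bijective ⇑(LinearMap.rTensor (R := K) A g) := by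
  let e := LinearEquiv.ofBijective g hg
  have he : LinearMap.rTensor (R := K) A g = (LinearEquiv.rTensor (R := K) A e).toLinearMap := by
    ext x w
    simp [e]
  rw [he]; exact (LinearEquiv.rTensor (R := K) A e).bijective

lemma aux_nontriv_of_equiv (e : A ≃ₗ[K] B) [Nontrivial B] : Nontrivial A := by
  obtain ⟨x, y, hxy⟩ := exists_pair_ne B
  exact ⟨e.symm x, e.symm y, fun hc => hxy (by simpa using congrArg ⇑e hc)⟩

lemma aux_nontriv_tensor [Nontrivial A] [Nontrivial B] : Nontrivial (A ⊗[K] B) := by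
  obtain ⟨a, ha⟩ := exists_ne (0 : A)
  obtain ⟨b, hb⟩ := exists_ne (0 : B)
  obtain ⟨φ, hφ⟩ := aux_exists_dual (K := K) ha
  obtain ⟨ψ, hψ⟩ := aux_exists_dual (K := K) hb
  refine ⟨a ⊗ₜ b, 0, fun h => ?_⟩
  have := congrArg (⇑((TensorProduct.lid K K).toLinearMap ∘ₗ TensorProduct.map φ ψ)) h
  simp [hφ, hψ] at this

lemma aux_nontriv_pow (V : Type*) [AddCommGroup V] [Module K V] [Nontrivial V] (k : ℕ) :
    Nontrivial (⨂[K]^k V) := by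
  induction k with
  | zero => exact aux_nontriv_of_equiv (PiTensorProduct.isEmptyEquiv (Fin 0))
  | succ k ih =>
    have h1 : Nontrivial (⨂[K]^1 V) :=
      aux_nontriv_of_equiv (PiTensorProduct.subsingletonEquiv (0 : Fin 1))
    have := aux_nontriv_tensor (K := K) (A := ⨂[K]^1 V) (B := ⨂[K]^k V)
    exact aux_nontriv_of_equiv ((TensorPower.cast K V (by omega : k + 1 = 1 + k)).trans
      (TensorPower.mulEquiv (n := 1) (m := k)).symm)

lemma aux_nontriv_pow' (V : Type*) [AddCommGroup V] [Module K V] (k : ℕ)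
    (h : k = 0 ∨ Nontrivial V) : Nontrivial (⨂[K]^k V) := by
  rcases h with h | h
  · exact aux_nontriv_of_equiv ((TensorPower.cast K V h).trans
      (PiTensorProduct.isEmptyEquiv (Fin 0)))
  · exact aux_nontriv_pow V k

end Helpers

section KoszulLemmas

open Function

variable (K : Type*) [Field K] (E E' : Type*)
  [AddCommGroup E] [Module K E] [AddCommGroup E'] [Module K E']

lemma dKoszul_eq_zero (f : E →ₗ[K] E') {n j : ℕ} (h : ¬ j < n) :
    dKoszul K E E' f n j = 0 := by
  unfold dKoszul; exact dif_neg h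

lemma dKoszul_eq_of_lt (f : E →ₗ[K] E') {n j : ℕ} (h : j < n) :
    dKoszul K E E' f n j =
    LinearMap.rTensor (⨂[K]^(n - (j + 1)) E)
        ((TensorPower.mulEquiv (n := j) (m := 1)).toLinearMap
          ∘ₗ LinearMap.lTensor (⨂[K]^j E') (toPow1 K E').toLinearMap)
      ∘ₗ (TensorProduct.assoc K (⨂[K]^j E') E' (⨂[K]^(n - (j + 1)) E)).symm.toLinearMap
      ∘ₗ LinearMap.lTensor (⨂[K]^j E') (LinearMap.rTensor (⨂[K]^(n - (j + 1)) E) f)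
      ∘ₗ LinearMap.lTensor (⨂[K]^j E')
          ((TensorProduct.map
              (PiTensorProduct.subsingletonEquiv (0 : Fin 1)).toLinearMap
              (LinearMap.id : (⨂[K]^(n - (j + 1)) E) →ₗ[K] (⨂[K]^(n - (j + 1)) E)))
            ∘ₗ (TensorPower.mulEquiv (n := 1) (m := n - (j + 1))).symm.toLinearMap
            ∘ₗ (TensorPower.cast K E (by omega : n - j = 1 + (n - (j + 1)))).toLinearMap) :=
  dif_pos h

lemma dKoszul_bij (f : E →ₗ[K] E') (hf : Bijective ⇑f) {n j : ℕ} (h : j < n) :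
    Bijective ⇑(dKoszul K E E' f n j) := by
  rw [dKoszul_eq_of_lt K E E' f h]
  simp only [LinearMap.coe_comp]
  refine Function.Bijective.comp ?_ (Function.Bijective.comp ?_ (Function.Bijective.comp ?_ ?_))
  · apply aux_bij_rTensor (K := K)
    apply aux_bij_comp (K := K)
    · exact (TensorPower.mulEquiv (R := K) (M := E') (n := j) (m := 1)).bijective
    · apply aux_bij_lTensor (K := K)
      exact (toPow1 K E').bijective
  · exact (TensorProduct.assoc K (⨂[K]^j E') E' (⨂[K]^(n - (j + 1)) E)).symm.bijective
  · apply aux_bij_lTensor (K := K)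
    apply aux_bij_rTensor (K := K)
    exact hf
  · apply aux_bij_lTensor (K := K)
    apply aux_bij_comp (K := K)
    · apply aux_bij_rTensor (K := K)
      exact (PiTensorProduct.subsingletonEquiv (R := K) (s := fun _ : Fin 1 => E) (0 : Fin 1)).bijective
    · apply aux_bij_comp (K := K)
      · exact (TensorPower.mulEquiv (R := K) (M := E) (n := 1) (m := n - (j + 1))).symm.bijective
      · exact (TensorPower.cast K E (by omega : n - j = 1 + (n - (j + 1)))).bijective

lemma dKoszul_F4_bij (f : E →ₗ[K] E') {n j : ℕ} (h : j < n) :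
    Bijective ⇑(LinearMap.lTensor (R := K) (⨂[K]^j E')
          ((TensorProduct.map
              (PiTensorProduct.subsingletonEquiv (0 : Fin 1)).toLinearMap
              (LinearMap.id : (⨂[K]^(n - (j + 1)) E) →ₗ[K] (⨂[K]^(n - (j + 1)) E)))
            ∘ₗ (TensorPower.mulEquiv (n := 1) (m := n - (j + 1))).symm.toLinearMap
            ∘ₗ (TensorPower.cast K E (by omega : n - j = 1 + (n - (j + 1)))).toLinearMap)) := by
  apply aux_bij_lTensor (K := K)
  apply aux_bij_comp (K := K)
  · apply aux_bij_rTensor (K := K)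
    exact (PiTensorProduct.subsingletonEquiv (R := K) (s := fun _ : Fin 1 => E) (0 : Fin 1)).bijective
  · apply aux_bij_comp (K := K)
    · exact (TensorPower.mulEquiv (R := K) (M := E) (n := 1) (m := n - (j + 1))).symm.bijective
    · exact (TensorPower.cast K E (by omega : n - j = 1 + (n - (j + 1)))).bijective

lemma dKoszul_F1_bij (f : E →ₗ[K] E') {n j : ℕ} (h : j < n) :
    Bijective ⇑(LinearMap.rTensor (R := K) (⨂[K]^(n - (j + 1)) E)
        ((TensorPower.mulEquiv (n := j) (m := 1)).toLinearMap
          ∘ₗ LinearMap.lTensor (⨂[K]^j E') (toPow1 K E').toLinearMap)) := by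
  apply aux_bij_rTensor (K := K)
  apply aux_bij_comp (K := K)
  · exact (TensorPower.mulEquiv (R := K) (M := E') (n := j) (m := 1)).bijective
  · apply aux_bij_lTensor (K := K)
    exact (toPow1 K E').bijective

lemma dKoszul_middle_inj (f : E →ₗ[K] E') {n j : ℕ} (h : j < n)
    (hinj : Injective ⇑(dKoszul K E E' f n j)) :
    Injective ⇑(LinearMap.lTensor (R := K) (⨂[K]^j E')
      (LinearMap.rTensor (R := K) (⨂[K]^(n - (j + 1)) E) f)) := by
  rw [dKoszul_eq_of_lt K E E' f h] at hinj
  simp only [LinearMap.coe_comp] at hinj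
  exact aux_inj_cancel hinj.of_comp.of_comp (dKoszul_F4_bij K E E' f h).surjective

lemma dKoszul_middle_surj (f : E →ₗ[K] E') {n j : ℕ} (h : j < n)
    (hsurj : Surjective ⇑(dKoszul K E E' f n j)) :
    Surjective ⇑(LinearMap.lTensor (R := K) (⨂[K]^j E')
      (LinearMap.rTensor (R := K) (⨂[K]^(n - (j + 1)) E) f)) := by
  rw [dKoszul_eq_of_lt K E E' f h] at hsurj
  simp only [LinearMap.coe_comp] at hsurj
  have s1 := aux_surj_cancel hsurj (dKoszul_F1_bij K E E' f h).injective
  have s2 := aux_surj_cancel s1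
    (TensorProduct.assoc K (⨂[K]^j E') E' (⨂[K]^(n - (j + 1)) E)).symm.injective
  exact s2.of_comp

end KoszulLemmas

section CompMapsLemmas

variable (K : Type*) [Field K] {M : ℕ → Type*} [∀ j, AddCommGroup (M j)] [∀ j, Module K (M j)]

lemma compMaps_zero (d : ∀ j, M j →ₗ[K] M (j + 1)) (i : ℕ) :
    compMaps K d i 0 = LinearMap.id := rfl

lemma compMaps_succ (d : ∀ j, M j →ₗ[K] M (j + 1)) (i q : ℕ) :
    compMaps K d i (q + 1) = (d (i + q)).comp (compMaps K d i q) := rfl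

end CompMapsLemmas

open Function in
/-- Let `K` be a field, `N ≥ 2`, and `f : E → E'` a linear map between
finite-dimensional `K`-vector spaces.  The `N`-complex with spaces
`M_j = E'^⊗j ⊗ E^⊗(N-1-j)` for `0 ≤ j ≤ N-1` (and `0` outside) and differentials
`id_{E'}^⊗j ⊗ f ⊗ id_E^⊗(N-2-j)` is acyclic if and only if `f` is bijective. -/
theorem statement6 (K : Type*) [Field K] (N : ℕ) (hN : 2 ≤ N)
    (E E' : Type*) [AddCommGroup E] [Module K E] [AddCommGroup E'] [Module K E']
    [FiniteDimensional K E] [FiniteDimensional K E'] (f : E →ₗ[K] E') :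
    IsAcyclicN K N (N - 1)
      (M := fun j => (⨂[K]^j E') ⊗[K] (⨂[K]^((N - 1) - j) E))
      (fun j => dKoszul K E E' f (N - 1) j)
    ↔ Function.Bijective f := by
  constructor
  · intro h
    obtain ⟨h1, h2⟩ := h 1 le_rfl (by omega)
    constructor
    · -- injectivity
      have hk := h2 0 (by omega) (by omega)
      rw [LinearMap.ker_eq_bot] at hk
      have hd0 : Injective ⇑(dKoszul K E E' f (N - 1) 0) := by
        rw [compMaps_succ, LinearMap.coe_comp] at hk
        exact aux_inj_cancel hk (fun x => ⟨x, rfl⟩)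
      have hmid := dKoszul_middle_inj K E E' f (show (0 : ℕ) < N - 1 by omega) hd0
      have hW : Nontrivial (⨂[K]^0 E') := aux_nontriv_pow' E' 0 (Or.inl rfl)
      have hr := aux_lTensor_inj hmid
      by_cases hE : Subsingleton E
      · exact Function.injective_of_subsingleton ⇑f
      · have hEn : Nontrivial E := not_subsingleton_iff_nontrivial.mp hE
        have hZ : Nontrivial (⨂[K]^(N - 1 - (0 + 1)) E) := aux_nontriv_pow' E _ (Or.inr hEn)
        exact aux_rTensor_inj hr
    · -- surjectivity
      have hk := h1 0 (by omega)
      have hzero : compMaps K (fun j => dKoszul K E E' f (N - 1) j) (0 + (N - 1)) 1 = 0 := by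
        rw [compMaps_succ]
        have hz : dKoszul K E E' f (N - 1) (0 + (N - 1) + 0) = 0 :=
          dKoszul_eq_zero K E E' f (by omega)
        rw [hz, LinearMap.zero_comp]
      rw [hzero, LinearMap.ker_zero] at hk
      have hsurj : Surjective ⇑(compMaps K (fun j => dKoszul K E E' f (N - 1) j) 0 (N - 1)) :=
        LinearMap.range_eq_top.mp hk.symm
      obtain ⟨q, hq⟩ : ∃ q, N - 1 = q + 1 := ⟨N - 2, by omega⟩
      rw [hq] at hsurj
      rw [compMaps_succ] at hsurj
      have hdq : Surjective ⇑(dKoszul K E E' f (q + 1) (0 + q)) := aux_surj_left _ _ hsurj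
      have hmid := dKoszul_middle_surj K E E' f (show 0 + q < q + 1 by omega) hdq
      by_cases hE' : Subsingleton E'
      · exact fun y => ⟨0, Subsingleton.elim _ _⟩
      · have hE'n : Nontrivial E' := not_subsingleton_iff_nontrivial.mp hE'
        have hW : Nontrivial (⨂[K]^(0 + q) E') := aux_nontriv_pow' E' _ (Or.inr hE'n)
        have hr := aux_lTensor_surj hmid
        have hZ : Nontrivial (⨂[K]^(q + 1 - (0 + q + 1)) E) :=
          aux_nontriv_pow' E _ (Or.inl (by omega))
        exact aux_rTensor_surj hr
  · intro hf
    have chain : ∀ q i, i + q ≤ N - 1 →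
        Bijective ⇑(compMaps K (fun j => dKoszul K E E' f (N - 1) j) i q) := by
      intro q
      induction q with
      | zero => exact fun i _ => Function.bijective_id
      | succ q ih =>
        intro i hi
        rw [compMaps_succ]
        exact aux_bij_comp (K := K) _ _ (dKoszul_bij K E E' f hf (show i + q < N - 1 by omega))
          (ih i (by omega))
    intro p hp1 hp2
    refine ⟨fun i hi => ?_, fun j hj hjp => ?_⟩
    · have hker : compMaps K (fun j => dKoszul K E E' f (N - 1) j) (i + (N - p)) p = 0 := by
        obtain ⟨p', rfl⟩ : ∃ p', p = p' + 1 := ⟨p - 1, by omega⟩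
        rw [compMaps_succ]
        have hz : dKoszul K E E' f (N - 1) (i + (N - (p' + 1)) + p') = 0 :=
          dKoszul_eq_zero K E E' f (by omega)
        rw [hz, LinearMap.zero_comp]
      rw [hker, LinearMap.ker_zero]
      exact (LinearMap.range_eq_top.mpr (chain (N - p) i hi).surjective).symm
    · exact LinearMap.ker_eq_bot.mpr (chain p j (by omega)).injective
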